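/- Assume k − 1 ≤ LR and set q' = ⌊(k−1)/R⌋, r' = (k−1) − q'·R and N = (q'+1)·r'. Then the part incoming weights of π^(k) are given in closed form by: for 1 ≤ i ≤ N, w_i(π^(k)) = (R − ⌈i/(q'+1)⌉)·β_I + (d_C − i + ⌈i/(q'+1)⌉)·β_C; for N < i ≤ k − 1, w_i(π^(k)) = ⌊(k−i−1)/q'⌋·β_I + (d_C + R − i − ⌊(k−i−1)/q'⌋)·β_C; and w_k(π^(k)) = (R + d_C − k)·β_C. -/
import Mathlib


/-- Relative location `h_π(i) = #{1 ≤ j ≤ i : π j = π i}`. -/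
def relLoc (π : ℕ → ℕ) (i : ℕ) : ℕ :=
  ((Finset.Icc 1 i).filter (fun j => π j = π i)).card

/-- Intra-cluster coefficient `a_i(π) = d_I + 1 − h_π(i)` (truncated subtraction). -/
def aCoef (dI : ℕ) (π : ℕ → ℕ) (i : ℕ) : ℕ :=
  dI + 1 - relLoc π i

/-- Cross-cluster coefficient `b_i(π) = max(0, d_C − (i − h_π(i)))` (truncated subtraction). -/
def bCoef (dC : ℕ) (π : ℕ → ℕ) (i : ℕ) : ℕ :=
  dC - (i - relLoc π i)

/-- Part incoming weight `w_i(π)`: for a separate position (`π i = 0`) it is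
`(d_I + d_C + 1 − i)·β_C`, otherwise `a_i(π)·β_I + b_i(π)·β_C`. -/
noncomputable def weight (dI dC : ℕ) (βI βC : ℝ) (π : ℕ → ℕ) (i : ℕ) : ℝ :=
  if π i = 0 then ((dI + dC + 1 - i : ℕ) : ℝ) * βC
  else (aCoef dI π i : ℝ) * βI + (bCoef dC π i : ℝ) * βC

/-- Min-cut `MC(π) = Σ_{i=1}^k min(α, w_i(π))`. -/
noncomputable def MC (k dI dC : ℕ) (βI βC α : ℝ) (π : ℕ → ℕ) : ℝ :=
  ∑ i ∈ Finset.Icc 1 k, min α (weight dI dC βI βC π i)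

/-- A cluster order: a `k`-tuple with entries in `{0, 1, …, L}`. -/
def IsClusterOrder (L k : ℕ) (π : ℕ → ℕ) : Prop :=
  ∀ i, 1 ≤ i → i ≤ k → π i ≤ L

/-- A selected node distribution `(s_0, s_1, …, s_L)`:
`R ≥ s_1 ≥ s_2 ≥ … ≥ s_L` and `s_0 + s_1 + … + s_L = k`. -/
def IsDist (L R k : ℕ) (s : ℕ → ℕ) : Prop :=
  (∀ i, 1 ≤ i → i + 1 ≤ L → s (i + 1) ≤ s i) ∧
  (∀ i, 1 ≤ i → i ≤ L → s i ≤ R) ∧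
  ∑ i ∈ Finset.range (L + 1), s i = k

/-- `π ∈ Π(s)`: `π` is a cluster order with `#{1 ≤ j ≤ k : π j = c} = s c` for all `0 ≤ c ≤ L`. -/
def MemPi (L k : ℕ) (s : ℕ → ℕ) (π : ℕ → ℕ) : Prop :=
  IsClusterOrder L k π ∧
  ∀ c, c ≤ L → ((Finset.Icc 1 k).filter (fun j => π j = c)).card = s c

/-- Vertical order of distribution `s` (possibly with separate entries, whose positions are
not constrained here):  over the cluster positions (`π i ≠ 0`) in increasing order, relative
locations are nondecreasing, with ties broken by increasing cluster index. -/
def IsVerticalOrder (L k : ℕ) (s : ℕ → ℕ) (π : ℕ → ℕ) : Prop :=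
  MemPi L k s π ∧
  ∀ i j, 1 ≤ i → i < j → j ≤ k → π i ≠ 0 → π j ≠ 0 →
    relLoc π i ≤ relLoc π j ∧ (relLoc π i = relLoc π j → π i < π j)

/-- The distribution `s*` (no separate node): `s*_0 = 0`, `s*_i = R` for `1 ≤ i ≤ ⌊k/R⌋`,
`s*_{⌊k/R⌋+1} = k − ⌊k/R⌋·R`, and `0` beyond. -/
def sStar0 (R k : ℕ) : ℕ → ℕ := fun i =>
  if i = 0 then 0
  else if i ≤ k / R then R
  else if i = k / R + 1 then k - k / R * R
  else 0

/-- The distribution with one separate node: `s_0 = 1`, `s_i = R` for `1 ≤ i ≤ ⌊(k−1)/R⌋`,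
`s_{⌊(k−1)/R⌋+1} = (k−1) − ⌊(k−1)/R⌋·R`, and `0` beyond. -/
def sStar1 (R k : ℕ) : ℕ → ℕ := fun i =>
  if i = 0 then 1
  else if i ≤ (k - 1) / R then R
  else if i = (k - 1) / R + 1 then (k - 1) - (k - 1) / R * R
  else 0

/-- `π^(j)`: the cluster order with exactly one separate entry, located at position `j`,
whose cluster entries form the vertical order of the distribution `sStar1 R k`. -/
def IsPiJ (L R k j : ℕ) (π : ℕ → ℕ) : Prop :=
  π j = 0 ∧ IsVerticalOrder L k (sStar1 R k) π

def rho (q' r' h c : ℕ) : ℕ := (h - 1) * q' + min (h - 1) r' + c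

lemma relLoc_pos (π : ℕ → ℕ) {i : ℕ} (hi : 1 ≤ i) : 1 ≤ relLoc π i := by
  have hmem : i ∈ (Finset.Icc 1 i).filter (fun j => π j = π i) := by
    simp [Finset.mem_filter, Finset.mem_Icc, hi]
  exact Finset.card_pos.mpr ⟨i, hmem⟩

lemma relLoc_le_self (π : ℕ → ℕ) (i : ℕ) : relLoc π i ≤ i := by
  calc relLoc π i ≤ (Finset.Icc 1 i).card := Finset.card_filter_le _ _
  _ = i := by rw [Nat.card_Icc]; omega

lemma incr_id (m : ℕ) (g : ℕ → ℕ)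
    (hmono : ∀ i j, 1 ≤ i → i < j → j ≤ m → g i < g j)
    (hlo : ∀ i, 1 ≤ i → i ≤ m → 1 ≤ g i)
    (hhi : ∀ i, 1 ≤ i → i ≤ m → g i ≤ m) :
    ∀ i, 1 ≤ i → i ≤ m → g i = i := by
  have step : ∀ d i, 1 ≤ i → i + d ≤ m → g i + d ≤ g (i + d) := by
    intro d
    induction d with
    | zero => intro i _ _; simp
    | succ n ih =>
      intro i h1 h2
      have hA := ih i h1 (by omega)
      have hB := hmono (i + n) (i + n + 1) (by omega) (by omega) (by omega)
      have e : i + (n + 1) = i + n + 1 := by omega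
      rw [e]
      omega
  intro i h1 h2
  have hA := step (i - 1) 1 le_rfl (by omega)
  have hB := step (m - i) i h1 (by omega)
  rw [show 1 + (i - 1) = i by omega] at hA
  rw [show i + (m - i) = m by omega] at hB
  have h1g := hlo 1 le_rfl (by omega)
  have hmg := hhi m (by omega) le_rfl
  omega

lemma sub_one_mul_add (h q : ℕ) (hh : 1 ≤ h) : (h - 1) * q + q = h * q := by
  rw [Nat.sub_one_mul]
  exact Nat.sub_add_cancel (Nat.le_mul_of_pos_left _ (by omega))

lemma rho_mono (q' r' R : ℕ) (h1 c1 h2 c2 : ℕ)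
    (hh1 : 1 ≤ h1)
    (hv1 : c1 ≤ q' ∧ h1 ≤ R ∨ c1 = q' + 1 ∧ h1 ≤ r')
    (hc2 : 1 ≤ c2)
    (hlt : h1 < h2 ∨ (h1 = h2 ∧ c1 < c2)) :
    rho q' r' h1 c1 < rho q' r' h2 c2 := by
  unfold rho
  rcases hlt with hlt | ⟨rfl, hlt⟩
  · have e2 : h1 * q' ≤ (h2 - 1) * q' := Nat.mul_le_mul_right _ (by omega)
    have e1 : (h1 - 1) * q' + q' = h1 * q' := sub_one_mul_add _ _ hh1
    omega
  · omega

lemma rho_le (q' r' R K : ℕ) (h c : ℕ)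
    (hK : K = q' * R + r') (hrR : r' ≤ R) (hh1 : 1 ≤ h)
    (hv : c ≤ q' ∧ h ≤ R ∨ c = q' + 1 ∧ h ≤ r') :
    rho q' r' h c ≤ K := by
  have hhR : h ≤ R := by rcases hv with ⟨_, hx⟩ | ⟨_, hx⟩ <;> omega
  have hR1 : 1 ≤ R := le_trans hh1 hhR
  unfold rho
  have m1 : (h - 1) * q' ≤ (R - 1) * q' := Nat.mul_le_mul_right _ (by omega)
  have m2 : (R - 1) * q' + q' = R * q' := sub_one_mul_add _ _ hR1
  have m3 : q' * R = R * q' := Nat.mul_comm _ _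
  omega

lemma part1_branch (q' r' N h c i : ℕ) (hN : N = (q' + 1) * r') (hc1 : 1 ≤ c)
    (heq : rho q' r' h c = i) (hiN : i ≤ N) (hh1 : 1 ≤ h) : h ≤ r' := by
  unfold rho at heq
  by_contra hcon
  push_neg at hcon
  have hmin : min (h - 1) r' = r' := by omega
  rw [hmin] at heq
  have m1 : r' * q' ≤ (h - 1) * q' := Nat.mul_le_mul_right _ (by omega)
  have m2 : N = r' * q' + r' := by rw [hN]; ring
  omega

lemma part1_div (q' r' h c i : ℕ) (hh1 : 1 ≤ h) (hc1 : 1 ≤ c) (hc2 : c ≤ q' + 1)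
    (hhr : h ≤ r') (heq : rho q' r' h c = i) :
    (i + q') / (q' + 1) = h := by
  unfold rho at heq
  have hmin : min (h - 1) r' = h - 1 := by omega
  rw [hmin] at heq
  have e0 : (h - 1) * q' + q' = h * q' := sub_one_mul_add _ _ hh1
  apply Nat.div_eq_of_lt_le
  · have e : h * (q' + 1) = h * q' + h := by ring
    rw [e]; omega
  · have e : (h + 1) * (q' + 1) = h * q' + h + q' + 1 := by ring
    rw [e]; omega

lemma part2_branch (q' r' N h c i : ℕ) (hN : N = (q' + 1) * r') (hh1 : 1 ≤ h)
    (hc2 : c ≤ q' + 1) (heq : rho q' r' h c = i) (hhr : h ≤ r') : i ≤ N := by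
  unfold rho at heq
  have hr1 : 1 ≤ r' := le_trans hh1 hhr
  have hmin : min (h - 1) r' = h - 1 := by omega
  rw [hmin] at heq
  have m1 : (h - 1) * q' ≤ (r' - 1) * q' := Nat.mul_le_mul_right _ (by omega)
  have m2 : (r' - 1) * q' + q' = r' * q' := sub_one_mul_add _ _ hr1
  have m3 : N = r' * q' + r' := by rw [hN]; ring
  omega

lemma part2_div (q' r' R K h c i : ℕ) (hK : K = q' * R + r') (hh1 : 1 ≤ h) (hhR : h ≤ R)
    (hc1 : 1 ≤ c) (hcq : c ≤ q') (hrh : r' < h)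
    (heq : rho q' r' h c = i) :
    (K - i) / q' = R - h := by
  unfold rho at heq
  have hmin : min (h - 1) r' = r' := by omega
  rw [hmin] at heq
  have e1 : (h - 1) * q' + (R - h + 1) * q' = R * q' := by
    rw [← Nat.add_mul]; congr 1; omega
  have e2 : (R - h + 1) * q' = (R - h) * q' + q' := by rw [Nat.succ_mul]
  have e3 : q' * R = R * q' := Nat.mul_comm _ _
  apply Nat.div_eq_of_lt_le <;> omega

/-- closed form for the part incoming weights of `π^(k)`, with
`q' = ⌊(k−1)/R⌋`, `r' = (k−1) − q'·R`, `N = (q'+1)·r'`. -/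
theorem stmt10 (L R k dI dC : ℕ) (βI βC : ℝ)
    (hL : 1 ≤ L) (hR : 2 ≤ R) (hk : 2 ≤ k)
    (hdI : dI = R - 1) (hdC : 1 ≤ dC) (hkd : k ≤ dI + dC)
    (hβ : βC ≤ βI) (hβC : 0 < βC)
    (hk1LR : k - 1 ≤ L * R)
    (q' r' N : ℕ) (hq : q' = (k - 1) / R) (hr : r' = (k - 1) - q' * R)
    (hN : N = (q' + 1) * r')
    (π : ℕ → ℕ) (hπ : IsPiJ L R k k π) :
    (∀ i, 1 ≤ i → i ≤ N →
      weight dI dC βI βC π i =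
        ((R - (i + q') / (q' + 1) : ℕ) : ℝ) * βI +
        ((dC + (i + q') / (q' + 1) - i : ℕ) : ℝ) * βC) ∧
    (∀ i, N < i → i ≤ k - 1 →
      weight dI dC βI βC π i =
        (((k - i - 1) / q' : ℕ) : ℝ) * βI +
        ((dC + R - i - (k - i - 1) / q' : ℕ) : ℝ) * βC) ∧
    weight dI dC βI βC π k = ((R + dC - k : ℕ) : ℝ) * βC := by
  obtain ⟨hπk, ⟨⟨hord, hcnt⟩, hvert⟩⟩ := hπ
  -- basic arithmetic facts
  have hmod := Nat.div_add_mod (k - 1) R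
  have hmlt : (k - 1) % R < R := Nat.mod_lt _ (by omega)
  rw [← hq] at hmod
  have hcm : q' * R = R * q' := Nat.mul_comm _ _
  have hK : k - 1 = q' * R + r' := by omega
  have hrR : r' < R := by omega
  have hNe : N = q' * r' + r' := by rw [hN]; ring
  have hmr : q' * r' ≤ q' * R := Nat.mul_le_mul_left _ (le_of_lt hrR)
  have hNk : N ≤ k - 1 := by omega
  -- no interior zeros
  have hzero : ∀ i, 1 ≤ i → i ≤ k - 1 → π i ≠ 0 := by
    intro i hi1 hi2 h0
    have hc0 := hcnt 0 (Nat.zero_le L)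
    have hs0 : sStar1 R k 0 = 1 := by simp [sStar1]
    rw [hs0] at hc0
    have hik : i ≠ k := by omega
    have hsub : ({i, k} : Finset ℕ) ⊆ (Finset.Icc 1 k).filter (fun j => π j = 0) := by
      intro x hx
      simp only [Finset.mem_insert, Finset.mem_singleton] at hx
      rcases hx with rfl | rfl
      · simp only [Finset.mem_filter, Finset.mem_Icc]
        exact ⟨⟨hi1, by omega⟩, h0⟩
      · simp only [Finset.mem_filter, Finset.mem_Icc]
        exact ⟨⟨by omega, le_rfl⟩, hπk⟩
    have h2 : 2 ≤ ((Finset.Icc 1 k).filter (fun j => π j = 0)).card := by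
      have hle := Finset.card_le_card hsub
      rwa [Finset.card_pair hik] at hle
    omega
  -- relLoc bounded by distribution
  have hsle : ∀ i, 1 ≤ i → i ≤ k → relLoc π i ≤ sStar1 R k (π i) := by
    intro i hi1 hi2
    have hcL := hord i hi1 hi2
    rw [← hcnt (π i) hcL]
    exact Finset.card_le_card
      (Finset.monotone_filter_left _ (Finset.Icc_subset_Icc_right hi2))
  -- validity of pairs
  have hvalid : ∀ i, 1 ≤ i → i ≤ k - 1 →
      (π i ≤ q' ∧ relLoc π i ≤ R ∨ π i = q' + 1 ∧ relLoc π i ≤ r') := by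
    intro i hi1 hi2
    have h0 := hzero i hi1 hi2
    have hs := hsle i hi1 (by omega)
    have h1 := relLoc_pos π hi1
    by_cases hcase : π i ≤ q'
    · left
      refine ⟨hcase, ?_⟩
      have hsv : sStar1 R k (π i) = R := by
        simp only [sStar1]
        rw [if_neg h0, if_pos (by rw [← hq]; exact hcase)]
      omega
    · by_cases hcase2 : π i = q' + 1
      · right
        refine ⟨hcase2, ?_⟩
        have hsv : sStar1 R k (π i) = r' := by
          simp only [sStar1]
          rw [if_neg h0, if_neg (by rw [← hq]; omega), if_pos (by rw [← hq]; omega)]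
          rw [← hq]
          omega
        omega
      · exfalso
        have hsv : sStar1 R k (π i) = 0 := by
          simp only [sStar1]
          rw [if_neg h0, if_neg (by rw [← hq]; omega), if_neg (by rw [← hq]; omega)]
        omega
  -- the key enumeration identity
  have key : ∀ i, 1 ≤ i → i ≤ k - 1 → rho q' r' (relLoc π i) (π i) = i := by
    refine incr_id (k - 1) (fun i => rho q' r' (relLoc π i) (π i)) ?_ ?_ ?_
    · intro i j hi1 hij hjk
      have hzi := hzero i hi1 (by omega)
      have hzj := hzero j (by omega) hjk
      have hv := hvert i j hi1 hij (by omega) hzi hzj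
      refine rho_mono q' r' R _ _ _ _ (relLoc_pos π hi1) (hvalid i hi1 (by omega))
        (by omega) ?_
      rcases Nat.lt_or_ge (relLoc π i) (relLoc π j) with hlt | hge
      · exact Or.inl hlt
      · have heq : relLoc π i = relLoc π j := le_antisymm hv.1 hge
        exact Or.inr ⟨heq, hv.2 heq⟩
    · intro i hi1 hi2
      have hz := hzero i hi1 hi2
      exact le_trans (by omega) (Nat.le_add_left (π i) _)
    · intro i hi1 hi2
      exact rho_le q' r' R (k - 1) _ _ hK (le_of_lt hrR) (relLoc_pos π hi1)
        (hvalid i hi1 hi2)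
  refine ⟨?_, ?_, ?_⟩
  · -- Part 1 : i ≤ N
    intro i hi1 hiN
    have hik1 : i ≤ k - 1 := le_trans hiN hNk
    have hz := hzero i hi1 hik1
    have hki := key i hi1 hik1
    have hv := hvalid i hi1 hik1
    have hh1 : 1 ≤ relLoc π i := relLoc_pos π hi1
    have hc1 : 1 ≤ π i := by omega
    have hc2 : π i ≤ q' + 1 := by rcases hv with ⟨hx, _⟩ | ⟨hx, _⟩ <;> omega
    have hhr : relLoc π i ≤ r' := part1_branch q' r' N _ _ i hN hc1 hki hiN hh1
    have hdiv : (i + q') / (q' + 1) = relLoc π i :=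
      part1_div q' r' _ _ i hh1 hc1 hc2 hhr hki
    have hhi : relLoc π i ≤ i := relLoc_le_self π i
    have ea : aCoef dI π i = R - (i + q') / (q' + 1) := by
      unfold aCoef; rw [hdiv]; omega
    have eb : bCoef dC π i = dC + (i + q') / (q' + 1) - i := by
      unfold bCoef; rw [hdiv]; omega
    unfold weight
    rw [if_neg hz, ea, eb]
  · -- Part 2 : N < i ≤ k - 1
    intro i hiN hik1
    have hi1 : 1 ≤ i := by omega
    have hz := hzero i hi1 hik1
    have hki := key i hi1 hik1
    have hv := hvalid i hi1 hik1
    have hh1 : 1 ≤ relLoc π i := relLoc_pos π hi1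
    have hhi : relLoc π i ≤ i := relLoc_le_self π i
    have hc2 : π i ≤ q' + 1 := by rcases hv with ⟨hx, _⟩ | ⟨hx, _⟩ <;> omega
    have hrh : r' < relLoc π i := by
      by_contra hcon
      push_neg at hcon
      have := part2_branch q' r' N _ _ i hN hh1 hc2 hki hcon
      omega
    have hcq : π i ≤ q' := by
      rcases hv with ⟨hx, _⟩ | ⟨_, hx⟩
      · exact hx
      · omega
    have hhR : relLoc π i ≤ R := by rcases hv with ⟨_, hx⟩ | ⟨_, hx⟩ <;> omega
    have hc1 : 1 ≤ π i := by omega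
    have hdiv : (k - 1 - i) / q' = R - relLoc π i :=
      part2_div q' r' R (k - 1) _ _ i hK hh1 hhR hc1 hcq hrh hki
    have hki1 : k - i - 1 = k - 1 - i := by omega
    have ea : aCoef dI π i = (k - i - 1) / q' := by
      unfold aCoef; rw [hki1, hdiv]; omega
    have eb : bCoef dC π i = dC + R - i - (k - i - 1) / q' := by
      unfold bCoef; rw [hki1, hdiv]; omega
    unfold weight
    rw [if_neg hz, ea, eb]
  · -- Part 3 : i = k
    have e : dI + dC + 1 - k = R + dC - k := by omega
    unfold weight
    rw [hπk, if_pos rfl, e]
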